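/- Let S and T be inverse semigroups and θ : S → T a semigroup homomorphism. If I₁ and I₂ are two-sided ideals of S such that the restrictions θ|_{I₁} and θ|_{I₂} are injective and θ(I₁) = θ(I₂), then I₁ = I₂. -/
import Mathlib


/-- An inverse semigroup: a semigroup in which every element has a unique
generalized inverse `star s`. -/
class InverseSemigroup (S : Type*) extends Semigroup S where
  star : S → S
  mul_star_mul : ∀ s : S, s * star s * s = s
  star_mul_star : ∀ s : S, star s * s * star s = star s
  star_unique : ∀ s t : S, s * t * s = s → t * s * t = t → t = star s

postfix:max "⋆" => InverseSemigroup.star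

private lemma hom_star {S T : Type*} [InverseSemigroup S] [InverseSemigroup T]
    (θ : S → T) (hθ : ∀ a b : S, θ (a * b) = θ a * θ b) (s : S) :
    θ s⋆ = (θ s)⋆ := by
  apply InverseSemigroup.star_unique
  · rw [← hθ, ← hθ, InverseSemigroup.mul_star_mul]
  · rw [← hθ, ← hθ, InverseSemigroup.star_mul_star]

private lemma subset_aux {S T : Type*} [InverseSemigroup S] [InverseSemigroup T]
    (θ : S → T) (hθ : ∀ a b : S, θ (a * b) = θ a * θ b)
    (I₁ I₂ : Set S)
    (hI₁ : ∀ s t : S, t ∈ I₁ → s * t ∈ I₁ ∧ t * s ∈ I₁)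
    (hI₂ : ∀ s t : S, t ∈ I₂ → s * t ∈ I₂ ∧ t * s ∈ I₂)
    (hinj₁ : Set.InjOn θ I₁)
    (him : θ '' I₁ ⊆ θ '' I₂) :
    I₁ ⊆ I₂ := by
  intro a ha
  obtain ⟨b, hb, hba⟩ := him ⟨a, ha, rfl⟩
  -- b⋆ * b ∈ I₂
  have hbsb : b⋆ * b ∈ I₂ := (hI₂ b⋆ b hb).1
  set x := a * (b⋆ * b) with hx
  have hx1 : x ∈ I₁ := (hI₁ (b⋆ * b) a ha).2
  have hx2 : x ∈ I₂ := (hI₂ a _ hbsb).1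
  have hθx : θ x = θ a := by
    rw [hx, hθ, hθ, hom_star θ hθ, hba, ← mul_assoc,
      InverseSemigroup.mul_star_mul]
  have : x = a := hinj₁ hx1 ha hθx
  rwa [← this]

theorem stmt0 {S T : Type*} [InverseSemigroup S] [InverseSemigroup T]
    (θ : S → T) (hθ : ∀ a b : S, θ (a * b) = θ a * θ b)
    (I₁ I₂ : Set S)
    (hI₁ : ∀ s t : S, t ∈ I₁ → s * t ∈ I₁ ∧ t * s ∈ I₁)
    (hI₂ : ∀ s t : S, t ∈ I₂ → s * t ∈ I₂ ∧ t * s ∈ I₂)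
    (hinj₁ : Set.InjOn θ I₁) (hinj₂ : Set.InjOn θ I₂)
    (him : θ '' I₁ = θ '' I₂) :
    I₁ = I₂ :=
  Set.Subset.antisymm
    (subset_aux θ hθ I₁ I₂ hI₁ hI₂ hinj₁ him.le)
    (subset_aux θ hθ I₂ I₁ hI₂ hI₁ hinj₂ him.ge)
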